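/- arXiv:1902.09230 — 3 statements merged into one kernel-verified Lean document; each statement's English description precedes it below -/
import Mathlib

section
/- With W Gaussian with mean −σ/2 and nonsingular covariance C (so E[e^{W_i}] = 1 for all i), for all i,k ∈ {1,…,N}: E[exp(W_i + W_k − max_{j=1..N} W_j)] = E[exp(W_k^{(i)} − max_{j=1..N} W_j^{(i)})], where W^{(i)} = W + C_{·i}. In particular the left-hand expectation equals an expectation of a random variable bounded by 1. -/
open Matrix Real MeasureTheory

/-- change-of-measure identity
`E[exp(W_i + W_k − max_j W_j)] = E[exp(W_k^{(i)} − max_j W_j^{(i)})]` with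
`W^{(i)} = W + C_{·i}`, written as integrals against the Gaussian density `f` of `W`;
the integrand on the right-hand side is bounded by 1. -/
theorem stmt_7 {N : ℕ} [NeZero N] (C : Matrix (Fin N) (Fin N) ℝ) (hC : C.PosDef) :
    let σ : Fin N → ℝ := fun i => C i i
    let f : (Fin N → ℝ) → ℝ := fun w =>
      (2 * Real.pi) ^ (-(N : ℝ) / 2) * C.det ^ (-(1 : ℝ) / 2) *
        Real.exp (-(1 / 2) * ((w + (1 / 2 : ℝ) • σ) ⬝ᵥ (C⁻¹ *ᵥ (w + (1 / 2 : ℝ) • σ))))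
    ∀ i k : Fin N,
      (∫ w : Fin N → ℝ, Real.exp (w i + w k - ⨆ j, w j) * f w) =
        (∫ w : Fin N → ℝ, Real.exp (w k - ⨆ j, w j) * f (fun j => w j - C j i)) ∧
      ∀ w : Fin N → ℝ, Real.exp (w k - ⨆ j, w j) ≤ 1 := by
  intro σ f i k
  have hinv : C⁻¹ * C = 1 :=
    Matrix.nonsing_inv_mul C (isUnit_iff_ne_zero.mpr hC.det_pos.ne')
  have hsymm : (C⁻¹)ᵀ = C⁻¹ := by
    rw [Matrix.transpose_nonsing_inv]; congr 1; exact hC.isHermitian.eq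
  -- the tilting identity
  have key : ∀ w : Fin N → ℝ, Real.exp (w i) * f w = f (fun j => w j - C j i) := by
    intro w
    have hfe : (fun j => w j - C j i) = w - C *ᵥ Pi.single i 1 := by
      funext j; simp [Matrix.mulVec_single]
    simp only [f, hfe]
    rw [mul_left_comm, ← Real.exp_add]
    congr 2
    set x : Fin N → ℝ := w + (1 / 2 : ℝ) • σ with hx
    have hx' : w - C *ᵥ Pi.single i 1 + (1 / 2 : ℝ) • σ = x - C *ᵥ Pi.single i 1 := by
      rw [hx]; abel
    rw [hx']
    have h1 : C⁻¹ *ᵥ (C *ᵥ Pi.single i 1) = Pi.single i 1 := by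
      rw [Matrix.mulVec_mulVec, hinv, Matrix.one_mulVec]
    have h2 : (C *ᵥ Pi.single i 1) ⬝ᵥ (C⁻¹ *ᵥ x) = x i := by
      rw [Matrix.dotProduct_mulVec, ← Matrix.mulVec_transpose, hsymm,
        Matrix.mulVec_mulVec, hinv, Matrix.one_mulVec, single_dotProduct,
        one_mul]
    have h3 : x ⬝ᵥ (C⁻¹ *ᵥ (C *ᵥ Pi.single i 1)) = x i := by
      rw [h1, dotProduct_single, mul_one]
    have h4 : (C *ᵥ Pi.single i 1) ⬝ᵥ (C⁻¹ *ᵥ (C *ᵥ Pi.single i 1)) = C i i := by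
      rw [h1, dotProduct_single, mul_one]
      simp [Matrix.mulVec_single]
    have hxi : x i = w i + C i i / 2 := by
      simp [hx, σ]; ring
    rw [sub_dotProduct, Matrix.mulVec_sub, dotProduct_sub,
      dotProduct_sub, h2, h3, h4, hxi]
    ring
  constructor
  · congr 1
    funext w
    rw [add_sub_assoc, Real.exp_add, mul_assoc, mul_left_comm, key w]
  · intro w
    rw [Real.exp_le_one_iff, sub_nonpos]
    exact le_ciSup (Set.Finite.bddAbove (Set.finite_range w)) k
end

section
/- With the setup of the variance-inflated densities g_{i,ε}, the infimum c_I^{(j)}(ε,λ) := inf_{w∈ℝ^N} (1−ε)^{N/2} exp((1−ε)Σ_{k=1}^m λ_k w_{i_k} − w_j + (ε/2)(w+σ/2)ᵀC⁻¹(w+σ/2)) is attained and equals (1−ε)^{N/2} exp( −((1−ε)/ε) Σ_{k=1}^m λ_k γ(t_{i_k}−t_j) + ((1−ε)²/(2ε)) Σ_{k=1}^m Σ_{l=1}^m λ_k λ_l γ(t_{i_k}−t_{i_l}) ), where γ(t_a − t_b) = (C_{aa} + C_{bb} − 2C_{ab})/2 is the variogram. -/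
open Matrix Real

/-- the infimum `c_I^{(j)}(ε,λ)` is attained and has the stated explicit
value in terms of the variogram `γ(t_a − t_b) = (C_{aa} + C_{bb} − 2C_{ab})/2`. -/
theorem stmt_10 {N m : ℕ} [NeZero N] [NeZero m]
    (C : Matrix (Fin N) (Fin N) ℝ) (hC : C.PosDef)
    (ε : ℝ) (hε : ε ∈ Set.Ioo (0 : ℝ) 1)
    (ι : Fin m → Fin N) (hι : Function.Injective ι)
    (lam : Fin m → ℝ) (hlam : ∀ k, 0 ≤ lam k) (hlamsum : ∑ k, lam k = 1)
    (j : Fin N) :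
    let σ : Fin N → ℝ := fun i => C i i
    let γ : Fin N → Fin N → ℝ := fun a b => (C a a + C b b - 2 * C a b) / 2
    let F : (Fin N → ℝ) → ℝ := fun w =>
      (1 - ε) ^ ((N : ℝ) / 2) *
        Real.exp ((1 - ε) * (∑ k, lam k * w (ι k)) - w j +
          (ε / 2) * ((w + (1 / 2 : ℝ) • σ) ⬝ᵥ (C⁻¹ *ᵥ (w + (1 / 2 : ℝ) • σ))))
    IsLeast (Set.range F)
      ((1 - ε) ^ ((N : ℝ) / 2) *
        Real.exp (-((1 - ε) / ε) * (∑ k, lam k * γ (ι k) j) +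
          ((1 - ε) ^ 2 / (2 * ε)) * ∑ k, ∑ l, lam k * lam l * γ (ι k) (ι l))) := by
  obtain ⟨hε0, hε1⟩ := hε
  intro σ γ F
  have hεne : ε ≠ 0 := ne_of_gt hε0
  have hCsymm : ∀ p q : Fin N, C p q = C q p := by
    intro p q
    have h := hC.isHermitian
    have := congrFun (congrFun h q) p
    simpa [Matrix.conjTranspose_apply] using this
  set a : Fin N → ℝ :=
    fun i => (1 - ε) * (∑ k, lam k * (if i = ι k then 1 else 0)) -
      (if i = j then 1 else 0) with ha
  have haD : ∀ v : Fin N → ℝ, a ⬝ᵥ v = (1 - ε) * (∑ k, lam k * v (ι k)) - v j := by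
    intro v
    simp only [dotProduct, ha]
    have h1 : ∀ i : Fin N,
        ((1 - ε) * (∑ k, lam k * (if i = ι k then 1 else 0)) -
          (if i = j then 1 else 0)) * v i
        = (1 - ε) * (∑ k, lam k * (if i = ι k then 1 else 0) * v i) -
          (if i = j then 1 else 0) * v i := by
      intro i
      rw [sub_mul, mul_assoc, Finset.sum_mul]
    rw [Finset.sum_congr rfl fun i _ => h1 i, Finset.sum_sub_distrib]
    congr 1
    · rw [← Finset.mul_sum, Finset.sum_comm]
      congr 1
      refine Finset.sum_congr rfl fun k _ => ?_
      simp [mul_ite, ite_mul, Finset.sum_ite_eq']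
    · simp [ite_mul, Finset.sum_ite_eq']
  have hCa : ∀ i, (C *ᵥ a) i = (1 - ε) * (∑ k, lam k * C i (ι k)) - C i j := by
    intro i
    have : (C *ᵥ a) i = a ⬝ᵥ (fun p => C i p) := by
      simp [mulVec, dotProduct, mul_comm]
    rw [this, haD]
  -- basic sums
  set S1 := ∑ k, lam k * C (ι k) (ι k) with hS1
  set S2 := ∑ k, lam k * C (ι k) j with hS2
  set S3 := ∑ k, ∑ l, lam k * lam l * C (ι k) (ι l) with hS3
  have haσ : a ⬝ᵥ σ = (1 - ε) * S1 - C j j := by rw [haD]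
  have haCa : a ⬝ᵥ (C *ᵥ a) = (1 - ε) ^ 2 * S3 - 2 * (1 - ε) * S2 + C j j := by
    rw [haD, hCa j]
    have h2 : ∑ k, lam k * (C *ᵥ a) (ι k) = (1 - ε) * S3 - S2 := by
      calc ∑ k, lam k * (C *ᵥ a) (ι k)
          = ∑ k, ((1 - ε) * ∑ l, lam k * lam l * C (ι k) (ι l)
              - lam k * C (ι k) j) := by
            refine Finset.sum_congr rfl fun k _ => ?_
            rw [hCa (ι k)]
            have h4 : ∑ l, lam k * lam l * C (ι k) (ι l)
                = lam k * ∑ l, lam l * C (ι k) (ι l) := by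
              rw [Finset.mul_sum]
              exact Finset.sum_congr rfl fun l _ => by ring
            rw [h4]; ring
        _ = (1 - ε) * S3 - S2 := by
            rw [Finset.sum_sub_distrib, ← Finset.mul_sum, hS3, hS2]
    have h3 : ∑ k, lam k * C j (ι k) = S2 := by
      rw [hS2]
      exact Finset.sum_congr rfl fun k _ => by rw [hCsymm j (ι k)]
    rw [h2, h3]
    ring
  -- gamma sums
  have hγ1 : (∑ k, lam k * γ (ι k) j) = (S1 + C j j - 2 * S2) / 2 := by
    have h : ∀ k, lam k * γ (ι k) j
        = lam k * C (ι k) (ι k) / 2 + lam k * C j j / 2 - lam k * C (ι k) j := by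
      intro k; simp only [γ]; ring
    rw [Finset.sum_congr rfl fun k _ => h k]
    simp only [Finset.sum_sub_distrib, Finset.sum_add_distrib]
    have h2 : ∑ k, lam k * C j j / 2 = C j j / 2 := by
      rw [← Finset.sum_div, ← Finset.sum_mul, hlamsum, one_mul]
    have h3 : ∑ k, lam k * C (ι k) (ι k) / 2 = S1 / 2 := by
      rw [← Finset.sum_div, hS1]
    rw [h2, h3, hS2]
    ring
  have hγ2 : (∑ k, ∑ l, lam k * lam l * γ (ι k) (ι l)) = S1 - S3 := by
    have h : ∀ k l, lam k * lam l * γ (ι k) (ι l)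
        = lam k * lam l * C (ι k) (ι k) / 2 + lam k * lam l * C (ι l) (ι l) / 2
          - lam k * lam l * C (ι k) (ι l) := by
      intro k l; simp only [γ]; ring
    rw [Finset.sum_congr rfl fun k _ => Finset.sum_congr rfl fun l _ => h k l]
    simp only [Finset.sum_sub_distrib, Finset.sum_add_distrib]
    have hA : ∑ k, ∑ l, lam k * lam l * C (ι k) (ι k) / 2 = S1 / 2 := by
      have hin : ∀ k : Fin m, ∑ l, lam k * lam l * C (ι k) (ι k) / 2
          = lam k * C (ι k) (ι k) / 2 := by
        intro k
        rw [Finset.sum_congr rfl fun l _ =>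
          (by ring : lam k * lam l * C (ι k) (ι k) / 2
            = lam k * C (ι k) (ι k) / 2 * lam l), ← Finset.mul_sum]
        rw [hlamsum, mul_one]
      rw [Finset.sum_congr rfl fun k _ => hin k, hS1, Finset.sum_div]
    have hB : ∑ k, ∑ l, lam k * lam l * C (ι l) (ι l) / 2 = S1 / 2 := by
      rw [Finset.sum_comm]
      have hin : ∀ l : Fin m, ∑ k, lam k * lam l * C (ι l) (ι l) / 2
          = lam l * C (ι l) (ι l) / 2 := by
        intro l
        rw [Finset.sum_congr rfl fun k _ =>
          (by ring : lam k * lam l * C (ι l) (ι l) / 2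
            = lam l * C (ι l) (ι l) / 2 * lam k), ← Finset.mul_sum]
        rw [hlamsum, mul_one]
      rw [Finset.sum_congr rfl fun l _ => hin l, hS1, Finset.sum_div]
    rw [hA, hB, hS3]
    ring
  -- positive-definiteness facts for B = C⁻¹
  have hBpd : (C⁻¹).PosDef := hC.inv
  have hBnn : ∀ x : Fin N → ℝ, 0 ≤ x ⬝ᵥ (C⁻¹ *ᵥ x) := by
    intro x
    have := hBpd.posSemidef.re_dotProduct_nonneg x
    simpa using this
  have hBsymm : ∀ p q : Fin N, C⁻¹ p q = C⁻¹ q p := by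
    intro p q
    have h := hBpd.isHermitian
    have := congrFun (congrFun h q) p
    simpa [Matrix.conjTranspose_apply] using this
  have hswap : ∀ x y : Fin N → ℝ, x ⬝ᵥ (C⁻¹ *ᵥ y) = y ⬝ᵥ (C⁻¹ *ᵥ x) := by
    intro x y
    simp only [dotProduct, mulVec, Finset.mul_sum]
    rw [Finset.sum_comm]
    refine Finset.sum_congr rfl fun q _ => Finset.sum_congr rfl fun p _ => ?_
    rw [hBsymm p q]
    ring
  have hBCa : C⁻¹ *ᵥ (C *ᵥ a) = a := by
    rw [Matrix.mulVec_mulVec,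
      Matrix.nonsing_inv_mul C (isUnit_iff_ne_zero.mpr hC.det_pos.ne'),
      Matrix.one_mulVec]
  -- the completed square identity
  set minE : ℝ := -(a ⬝ᵥ σ) / 2 - (1 / (2 * ε)) * (a ⬝ᵥ (C *ᵥ a)) with hminE
  have hkey : ∀ u : Fin N → ℝ,
      a ⬝ᵥ u + (ε / 2) * (u ⬝ᵥ (C⁻¹ *ᵥ u))
        = (ε / 2) * ((u + (1 / ε) • (C *ᵥ a)) ⬝ᵥ (C⁻¹ *ᵥ (u + (1 / ε) • (C *ᵥ a))))
          - (1 / (2 * ε)) * (a ⬝ᵥ (C *ᵥ a)) := by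
    intro u
    have hc1 : u ⬝ᵥ (C⁻¹ *ᵥ ((1 / ε) • (C *ᵥ a))) = (1 / ε) * (a ⬝ᵥ u) := by
      rw [Matrix.mulVec_smul, dotProduct_smul, hBCa, smul_eq_mul, dotProduct_comm]
    have hc2 : ((1 / ε) • (C *ᵥ a)) ⬝ᵥ (C⁻¹ *ᵥ u) = (1 / ε) * (a ⬝ᵥ u) := by
      rw [smul_dotProduct, smul_eq_mul, hswap, hBCa, dotProduct_comm]
    have hc3 : ((1 / ε) • (C *ᵥ a)) ⬝ᵥ (C⁻¹ *ᵥ ((1 / ε) • (C *ᵥ a)))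
        = (1 / ε) ^ 2 * (a ⬝ᵥ (C *ᵥ a)) := by
      rw [smul_dotProduct, Matrix.mulVec_smul, dotProduct_smul, hBCa, smul_eq_mul,
        smul_eq_mul, dotProduct_comm]
      ring
    rw [Matrix.mulVec_add, dotProduct_add, add_dotProduct, add_dotProduct, hc1, hc2, hc3]
    field_simp
    ring
  -- exponent of F in terms of a
  have hE : ∀ w : Fin N → ℝ,
      (1 - ε) * (∑ k, lam k * w (ι k)) - w j +
        (ε / 2) * ((w + (1 / 2 : ℝ) • σ) ⬝ᵥ (C⁻¹ *ᵥ (w + (1 / 2 : ℝ) • σ)))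
      = (ε / 2) * (((w + (1 / 2 : ℝ) • σ) + (1 / ε) • (C *ᵥ a)) ⬝ᵥ
          (C⁻¹ *ᵥ ((w + (1 / 2 : ℝ) • σ) + (1 / ε) • (C *ᵥ a)))) + minE := by
    intro w
    have h1 : (1 - ε) * (∑ k, lam k * w (ι k)) - w j
        = a ⬝ᵥ (w + (1 / 2 : ℝ) • σ) - (1 / 2) * (a ⬝ᵥ σ) := by
      rw [dotProduct_add, dotProduct_smul, smul_eq_mul, haD w]
      ring
    rw [h1, hminE]
    have hk := hkey (w + (1 / 2 : ℝ) • σ)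
    linarith
  -- value of minE
  have hval : minE = -((1 - ε) / ε) * (∑ k, lam k * γ (ι k) j) +
      ((1 - ε) ^ 2 / (2 * ε)) * ∑ k, ∑ l, lam k * lam l * γ (ι k) (ι l) := by
    rw [hminE, haσ, haCa, hγ1, hγ2]
    field_simp
    ring
  -- conclude
  have hcpos : (0 : ℝ) < (1 - ε) ^ ((N : ℝ) / 2) :=
    Real.rpow_pos_of_pos (by linarith) _
  constructor
  · refine ⟨(-(1 / ε)) • (C *ᵥ a) - (1 / 2 : ℝ) • σ, ?_⟩
    show (1 - ε) ^ ((N : ℝ) / 2) * Real.exp _ = _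
    have hz : ((-(1 / ε)) • (C *ᵥ a) - (1 / 2 : ℝ) • σ + (1 / 2 : ℝ) • σ)
        + (1 / ε) • (C *ᵥ a) = 0 := by
      ext i
      simp
    rw [hE ((-(1 / ε)) • (C *ᵥ a) - (1 / 2 : ℝ) • σ), hz]
    rw [Matrix.mulVec_zero, dotProduct_zero, mul_zero, zero_add, hval]
  · rintro x ⟨w, rfl⟩
    show (1 - ε) ^ ((N : ℝ) / 2) * Real.exp _ ≤ (1 - ε) ^ ((N : ℝ) / 2) * Real.exp _
    refine mul_le_mul_of_nonneg_left (Real.exp_le_exp.mpr ?_) hcpos.le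
    rw [hE w, ← hval]
    have := hBnn ((w + (1 / 2 : ℝ) • σ) + (1 / ε) • (C *ᵥ a))
    nlinarith [this, hε0]
end

section
/- Let W be Gaussian with mean −σ/2 and nonsingular covariance C, f its density, f_j(w) = e^{w_j}f(w), and g_{i,ε} as above. Then for every probability vector p with p_i > 0 for all i and every ε ∈ (0,1), C(p,ε) := inf_{w∈ℝ^N} (Σ_i p_i g_{i,ε}(w)) / (max_j f_j(w)) = inf_{w∈ℝ^N} min_{j=1..N} (Σ_i p_i g_{i,ε}(w)) / f_j(w), and C(p,ε) > 0. -/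
/-!
Cauchy–Schwarz for the inner product given by `C⁻¹`, applied to `v = w + σ/2` and the column
`C e_j`, gives `(w_j + C_jj/2)² ≤ C_jj · Q(w)` with `Q(w) = vᵀC⁻¹v`, hence `w_j ≤ Q(w)/2` by AM–GM.
So the exponent `w_j - Q(w)/2` of `f_j` is nonpositive, and multiplying it by `1 - ε` can only
increase it: `g_j ≥ (1 - ε)^(N/2) f_j` pointwise. Every ratio is therefore at least
`(min_i p_i) (1 - ε)^(N/2) > 0`. The identity of the two infima holds because the maximum of
finitely many positive `f_j(w)` is attained.
-/

open Matrix Real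

namespace Matrix

variable {n : Type*} [Fintype n]

theorem PosSemidef.sq_dotProduct_mulVec_le {M : Matrix n n ℝ} (hM : M.PosSemidef) (u v : n → ℝ) :
    (v ⬝ᵥ M *ᵥ u) ^ 2 ≤ (u ⬝ᵥ M *ᵥ u) * (v ⬝ᵥ M *ᵥ v) := by
  have hsymm : u ⬝ᵥ M *ᵥ v = v ⬝ᵥ M *ᵥ u := by
    rw [← dotProduct_transpose_mulVec, (isHermitian_iff_isSymm.mp hM.isHermitian).eq]
  have hquad : ∀ t : ℝ,
      0 ≤ (u ⬝ᵥ M *ᵥ u) * (t * t) + 2 * (v ⬝ᵥ M *ᵥ u) * t + v ⬝ᵥ M *ᵥ v := by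
    intro t
    have h := hM.dotProduct_mulVec_nonneg (v + t • u)
    simp only [star_trivial, mulVec_add, mulVec_smul, add_dotProduct, dotProduct_add,
      smul_dotProduct, dotProduct_smul, smul_eq_mul, hsymm] at h
    linarith
  have hdisc := discrim_le_zero hquad
  rw [discrim] at hdisc
  linarith

theorem PosDef.sq_apply_le_diag_mul_dotProduct_inv_mulVec [DecidableEq n] {C : Matrix n n ℝ}
    (hC : C.PosDef) (v : n → ℝ) (j : n) : v j ^ 2 ≤ C j j * (v ⬝ᵥ C⁻¹ *ᵥ v) := by
  have hinv : C⁻¹ *ᵥ (C *ᵥ Pi.single j 1) = Pi.single j 1 := by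
    rw [mulVec_mulVec, nonsing_inv_mul _ ((isUnit_iff_isUnit_det _).mp hC.isUnit), one_mulVec]
  have h := hC.inv.posSemidef.sq_dotProduct_mulVec_le (C *ᵥ Pi.single j 1) v
  rwa [hinv, dotProduct_single_one, dotProduct_single_one, mulVec_single_one, col_apply] at h

theorem PosDef.apply_le_half_dotProduct_inv_mulVec_add_half_diag [DecidableEq n]
    {C : Matrix n n ℝ} (hC : C.PosDef) (w : n → ℝ) (j : n) :
    w j ≤ (w + (1 / 2 : ℝ) • fun k => C k k) ⬝ᵥ C⁻¹ *ᵥ (w + (1 / 2 : ℝ) • fun k => C k k) / 2 := by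
  have h := hC.sq_apply_le_diag_mul_dotProduct_inv_mulVec (w + (1 / 2 : ℝ) • fun k => C k k) j
  simp only [Pi.add_apply, Pi.smul_apply, smul_eq_mul] at h
  nlinarith [hC.diag_pos (i := j), sq_nonneg (w j - C j j / 2)]

theorem PosDef.exp_apply_mul_exp_neg_half_le [DecidableEq n] {C : Matrix n n ℝ} (hC : C.PosDef)
    {t : ℝ} (ht : t ≤ 1) (w : n → ℝ) (j : n) :
    exp (w j) * exp (-(1 / 2) *
        ((w + (1 / 2 : ℝ) • fun k => C k k) ⬝ᵥ C⁻¹ *ᵥ (w + (1 / 2 : ℝ) • fun k => C k k))) ≤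
      exp (t * w j) * exp (-(t / 2) *
        ((w + (1 / 2 : ℝ) • fun k => C k k) ⬝ᵥ C⁻¹ *ᵥ (w + (1 / 2 : ℝ) • fun k => C k k))) := by
  have h := hC.apply_le_half_dotProduct_inv_mulVec_add_half_diag w j
  rw [← exp_add, ← exp_add, exp_le_exp]
  nlinarith [mul_nonneg (sub_nonneg.mpr ht) (sub_nonneg.mpr h)]

end Matrix

theorem div_ciSup_eq_ciInf_div {ι : Type*} [Finite ι] [Nonempty ι] {a : ι → ℝ}
    (ha : ∀ i, 0 < a i) {s : ℝ} (hs : 0 ≤ s) : s / ⨆ i, a i = ⨅ i, s / a i := by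
  obtain ⟨i₀, hi₀⟩ := Finite.exists_max a
  have hsup : ⨆ i, a i = a i₀ := le_antisymm (ciSup_le hi₀) (le_ciSup (Finite.bddAbove_range a) i₀)
  rw [hsup]
  exact le_antisymm (le_ciInf fun i => div_le_div_of_nonneg_left hs (ha i) (hi₀ i))
    (ciInf_le (Finite.bddBelow_range _) i₀)

theorem stmt_17_general {N : ℕ} [NeZero N] (C : Matrix (Fin N) (Fin N) ℝ) (hC : C.PosDef)
    (ε : ℝ) (hε : ε ∈ Set.Ioo (0 : ℝ) 1)
    (p : Fin N → ℝ) (hp : ∀ i, 0 < p i) :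
    let σ : Fin N → ℝ := fun k => C k k
    let f : (Fin N → ℝ) → ℝ := fun w =>
      (2 * Real.pi) ^ (-(N : ℝ) / 2) * C.det ^ (-(1 : ℝ) / 2) *
        Real.exp (-(1 / 2) * ((w + (1 / 2 : ℝ) • σ) ⬝ᵥ (C⁻¹ *ᵥ (w + (1 / 2 : ℝ) • σ))))
    let fj : Fin N → (Fin N → ℝ) → ℝ := fun j w => Real.exp (w j) * f w
    let g : Fin N → (Fin N → ℝ) → ℝ := fun i w =>
      (1 - ε) ^ ((N : ℝ) / 2) * (2 * Real.pi) ^ (-(N : ℝ) / 2) * C.det ^ (-(1 : ℝ) / 2) *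
        Real.exp ((1 - ε) * w i) *
        Real.exp (-((1 - ε) / 2) * ((w + (1 / 2 : ℝ) • σ) ⬝ᵥ (C⁻¹ *ᵥ (w + (1 / 2 : ℝ) • σ))))
    (⨅ w : Fin N → ℝ, (∑ i, p i * g i w) / (⨆ j, fj j w)) =
      (⨅ w : Fin N → ℝ, ⨅ j, (∑ i, p i * g i w) / fj j w) ∧
    0 < ⨅ w : Fin N → ℝ, (∑ i, p i * g i w) / (⨆ j, fj j w) := by
  intro σ f fj g
  obtain ⟨hε₀, hε₁⟩ := hε
  set c := (1 - ε) ^ ((N : ℝ) / 2)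
  set K := (2 * π) ^ (-(N : ℝ) / 2) * C.det ^ (-(1 : ℝ) / 2)
  have hc : 0 < c := rpow_pos_of_pos (by linarith) _
  have hK : 0 < K := mul_pos (rpow_pos_of_pos (by positivity) _) (rpow_pos_of_pos hC.det_pos _)
  have hfj : ∀ j w, 0 < fj j w := fun j w => mul_pos (exp_pos _) (mul_pos hK (exp_pos _))
  have hfj_le_g : ∀ j w, c * fj j w ≤ g j w := fun j w => by
    have h := hC.exp_apply_mul_exp_neg_half_le (t := 1 - ε) (by linarith) w j
    calc c * fj j w = c * K * (exp (w j) * exp _) := by simp only [fj, f]; ring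
      _ ≤ c * K * (exp ((1 - ε) * w j) * exp _) := mul_le_mul_of_nonneg_left h (by positivity)
      _ = g j w := by simp only [g, c, K]; ring
  have hg : ∀ i w, 0 ≤ g i w := fun i w => (mul_pos hc (hfj i w)).le.trans (hfj_le_g i w)
  have hratio : ∀ w, (∑ i, p i * g i w) / (⨆ j, fj j w) = ⨅ j, (∑ i, p i * g i w) / fj j w :=
    fun w => div_ciSup_eq_ciInf_div (hfj · w)
      (Finset.sum_nonneg fun i _ => mul_nonneg (hp i).le (hg i w))
  obtain ⟨m, hm⟩ := Finite.exists_min p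
  have hbound : ∀ w j, p m * c ≤ (∑ i, p i * g i w) / fj j w := fun w j => by
    rw [le_div_iff₀ (hfj j w)]
    calc p m * c * fj j w ≤ p j * c * fj j w := by gcongr; exact hm j
      _ ≤ p j * g j w := by
          rw [mul_assoc]; exact mul_le_mul_of_nonneg_left (hfj_le_g j w) (hp j).le
      _ ≤ ∑ i, p i * g i w :=
          Finset.single_le_sum (fun i _ => mul_nonneg (hp i).le (hg i w)) (Finset.mem_univ j)
  refine ⟨iInf_congr hratio, (mul_pos (hp m) hc).trans_le (le_ciInf fun w => ?_)⟩
  rw [hratio]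
  exact le_ciInf (hbound w)

/-- the rejection constant `C(p,ε)` can be written either as an infimum
of the ratio to `max_j f_j` or as a double infimum over `w` and `j`, and it is
strictly positive. -/
theorem stmt_17 {N : ℕ} [NeZero N] (C : Matrix (Fin N) (Fin N) ℝ) (hC : C.PosDef)
    (ε : ℝ) (hε : ε ∈ Set.Ioo (0 : ℝ) 1)
    (p : Fin N → ℝ) (hp : ∀ i, 0 < p i) (hpsum : ∑ i, p i = 1) :
    let σ : Fin N → ℝ := fun k => C k k
    let f : (Fin N → ℝ) → ℝ := fun w =>
      (2 * Real.pi) ^ (-(N : ℝ) / 2) * C.det ^ (-(1 : ℝ) / 2) *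
        Real.exp (-(1 / 2) * ((w + (1 / 2 : ℝ) • σ) ⬝ᵥ (C⁻¹ *ᵥ (w + (1 / 2 : ℝ) • σ))))
    let fj : Fin N → (Fin N → ℝ) → ℝ := fun j w => Real.exp (w j) * f w
    let g : Fin N → (Fin N → ℝ) → ℝ := fun i w =>
      (1 - ε) ^ ((N : ℝ) / 2) * (2 * Real.pi) ^ (-(N : ℝ) / 2) * C.det ^ (-(1 : ℝ) / 2) *
        Real.exp ((1 - ε) * w i) *
        Real.exp (-((1 - ε) / 2) * ((w + (1 / 2 : ℝ) • σ) ⬝ᵥ (C⁻¹ *ᵥ (w + (1 / 2 : ℝ) • σ))))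
    (⨅ w : Fin N → ℝ, (∑ i, p i * g i w) / (⨆ j, fj j w)) =
      (⨅ w : Fin N → ℝ, ⨅ j, (∑ i, p i * g i w) / fj j w) ∧
    0 < ⨅ w : Fin N → ℝ, (∑ i, p i * g i w) / (⨆ j, fj j w) :=
  stmt_17_general C hC ε hε p hp
end
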